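/- arXiv:2102.13453 — 5 statements merged into one kernel-verified Lean document; each statement's English description precedes it below -/
import Mathlib

section
/- Define F(r,z) = (C(r+z)/C(r)) e^{z/b}. For fixed z ≥ 0, F(r,z) is nonincreasing in r on the set where r, r+z ∈ [l,u]; equivalently, the partial derivative ∂F/∂r equals e^{z/b} [ (e^{-z/b}-1)(e^{(u-r)/b}-1) + (1-e^{z/b})(e^{(r-l)/b}-1) ] / (2b e^{(u-l)/b} C(r)^2) ≤ 0. -/
/-!
By the quotient rule the derivative is `(C'(r+z) C(r) - C(r+z) C'(r)) e^{z/b} / C(r)^2`. Writing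
`p = e^{-(r-l)/b}`, `q = e^{-(u-r)/b}`, `w = e^{z/b}`, the quotient-rule numerator is
`(p (1/w - 1) + q (1 - w) + p q (w - 1/w)) / (2b)`, which is the claimed one because
`e^{-(u-l)/b} = p q`. For `z ≥ 0` and `r ∈ [l, u]` each of the two products in the claimed
numerator is a factor `≤ 0` times a factor `≥ 0`.
-/

open Real Set

/-- The mass that the Laplace distribution with centre `r` and scale `b` gives to `[l, u]`. -/
noncomputable def laplaceMass (l u b r : ℝ) : ℝ :=
  1 - 1 / 2 * (exp (-(r - l) / b) + exp (-(u - r) / b))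

theorem hasDerivAt_laplaceMass (l u b r : ℝ) :
    HasDerivAt (laplaceMass l u b) ((exp (-(r - l) / b) - exp (-(u - r) / b)) / (2 * b)) r := by
  have hl : HasDerivAt (fun s => -(s - l) / b) (-1 / b) r := by
    simpa using (((hasDerivAt_id r).sub_const l).neg).div_const b
  have hu : HasDerivAt (fun s => -(u - s) / b) (1 / b) r := by
    simpa using (((hasDerivAt_id r).const_sub u).neg).div_const b
  refine (((hl.exp.add hu.exp).const_mul (1 / 2 : ℝ)).const_sub 1).congr_deriv ?_
  ring

theorem laplaceMass_pos {l u b r : ℝ} (hlu : l < u) (hb : 0 < b) (hr : r ∈ Icc l u) :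
    0 < laplaceMass l u b r := by
  have hexp_le (x : ℝ) (hx : 0 ≤ x) : exp (-x / b) ≤ 1 :=
    exp_le_one_iff.2 (div_nonpos_of_nonpos_of_nonneg (neg_nonpos.2 hx) hb.le)
  have hexp_lt (x : ℝ) (hx : 0 < x) : exp (-x / b) < 1 :=
    exp_lt_one_iff.2 (div_neg_of_neg_of_pos (neg_neg_iff_pos.2 hx) hb)
  unfold laplaceMass
  rcases eq_or_lt_of_le hr.1 with rfl | hlr
  · linarith [hexp_lt (u - l) (sub_pos.2 hlu), hexp_le (l - l) (sub_self l).ge]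
  · linarith [hexp_lt (r - l) (sub_pos.2 hlr), hexp_le (u - r) (sub_nonneg.2 hr.2)]

theorem laplaceMass_wronskian (l u b r z : ℝ) (hb : b ≠ 0) :
    ((exp (-(r + z - l) / b) - exp (-(u - (r + z)) / b)) / (2 * b) * laplaceMass l u b r -
        laplaceMass l u b (r + z) * ((exp (-(r - l) / b) - exp (-(u - r) / b)) / (2 * b))) *
        exp (z / b) =
      exp (z / b) * ((exp (-z / b) - 1) * (exp ((u - r) / b) - 1) +
          (1 - exp (z / b)) * (exp ((r - l) / b) - 1)) / (2 * b * exp ((u - l) / b)) := by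
  unfold laplaceMass
  simp only [neg_div, sub_div, add_div, exp_neg, exp_sub, exp_add]
  field_simp
  ring

theorem blp_numerator_nonpos {l u b r z : ℝ} (hb : 0 < b) (hz : 0 ≤ z) (hr : r ∈ Icc l u) :
    (exp (-z / b) - 1) * (exp ((u - r) / b) - 1) + (1 - exp (z / b)) * (exp ((r - l) / b) - 1)
      ≤ 0 := by
  have one_le (x : ℝ) (hx : 0 ≤ x) : 1 ≤ exp (x / b) := one_le_exp (div_nonneg hx hb.le)
  have hneg : exp (-z / b) ≤ 1 :=
    exp_le_one_iff.2 (div_nonpos_of_nonpos_of_nonneg (neg_nonpos.2 hz) hb.le)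
  have hu := one_le (u - r) (sub_nonneg.2 hr.2)
  have hl := one_le (r - l) (sub_nonneg.2 hr.1)
  have hw := one_le z hz
  linarith [mul_nonneg (sub_nonneg.2 hneg) (sub_nonneg.2 hu),
    mul_nonneg (sub_nonneg.2 hw) (sub_nonneg.2 hl)]

theorem blp_F_deriv_r_general (l u b : ℝ) (hlu : l < u) (hb : 0 < b)
    (C : ℝ → ℝ)
    (hC : ∀ r, C r = 1 - (1 / 2) * (Real.exp (-(r - l) / b) + Real.exp (-(u - r) / b)))
    (F : ℝ → ℝ → ℝ)
    (hF : ∀ r z, F r z = (C (r + z) / C r) * Real.exp (z / b))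
    (z : ℝ) (hz : 0 ≤ z) (r : ℝ) (hr : r ∈ Set.Icc l u) :
    HasDerivAt (fun s => F s z)
      (Real.exp (z / b) *
        ((Real.exp (-z / b) - 1) * (Real.exp ((u - r) / b) - 1) +
          (1 - Real.exp (z / b)) * (Real.exp ((r - l) / b) - 1)) /
        (2 * b * Real.exp ((u - l) / b) * (C r) ^ 2)) r ∧
    Real.exp (z / b) *
        ((Real.exp (-z / b) - 1) * (Real.exp ((u - r) / b) - 1) +
          (1 - Real.exp (z / b)) * (Real.exp ((r - l) / b) - 1)) /
        (2 * b * Real.exp ((u - l) / b) * (C r) ^ 2) ≤ 0 := by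
  have hC' : C = laplaceMass l u b := funext hC
  have hF' : (fun s => F s z) =
      fun s => laplaceMass l u b (s + z) / laplaceMass l u b s * exp (z / b) :=
    funext fun s => by rw [hF, hC']
  subst hC'
  refine ⟨?_, ?_⟩
  · have hquot := (((hasDerivAt_laplaceMass l u b (r + z)).comp_add_const r z).div
      (hasDerivAt_laplaceMass l u b r) (laplaceMass_pos hlu hb hr).ne').mul_const (exp (z / b))
    rw [hF']
    refine hquot.congr_deriv ?_
    rw [div_mul_eq_mul_div, laplaceMass_wronskian l u b r z hb.ne', div_div]
  · exact div_nonpos_of_nonpos_of_nonneg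
      (mul_nonpos_of_nonneg_of_nonpos (exp_pos _).le (blp_numerator_nonpos hb hz hr))
      (by positivity)

theorem blp_F_deriv_r (l u b : ℝ) (hlu : l < u) (hb : 0 < b)
    (C : ℝ → ℝ)
    (hC : ∀ r, C r = 1 - (1 / 2) * (Real.exp (-(r - l) / b) + Real.exp (-(u - r) / b)))
    (F : ℝ → ℝ → ℝ)
    (hF : ∀ r z, F r z = (C (r + z) / C r) * Real.exp (z / b))
    (z : ℝ) (hz : 0 ≤ z) (r : ℝ) (hr : r ∈ Set.Icc l u) (hrz : r + z ∈ Set.Icc l u) :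
    HasDerivAt (fun s => F s z)
      (Real.exp (z / b) *
        ((Real.exp (-z / b) - 1) * (Real.exp ((u - r) / b) - 1) +
          (1 - Real.exp (z / b)) * (Real.exp ((r - l) / b) - 1)) /
        (2 * b * Real.exp ((u - l) / b) * (C r) ^ 2)) r ∧
    Real.exp (z / b) *
        ((Real.exp (-z / b) - 1) * (Real.exp ((u - r) / b) - 1) +
          (1 - Real.exp (z / b)) * (Real.exp ((r - l) / b) - 1)) /
        (2 * b * Real.exp ((u - l) / b) * (C r) ^ 2) ≤ 0 :=
  blp_F_deriv_r_general l u b hlu hb C hC F hF z hz r hr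
end

section
/- For F(r,z) = (C(r+z)/C(r)) e^{z/b}, the maximum of F over all r ∈ [l,u] and z ∈ [0, Δf] with r+z ∈ [l,u] (where 0 < Δf ≤ u - l) is attained at r = l, z = Δf, and equals (C(l+Δf)/C(l)) e^{Δf/b}. -/
private lemma blp_key1 (A t K : ℝ) (hA0 : 0 < A) (ht0 : 0 < t) (hA1 : A ≤ 1)
    (ht1 : t ≤ 1) (hK0 : 0 < K) (hK1 : K ≤ 1) (hKAt : K ≤ A * t) :
    (1 - (A * t + K / (A * t)) / 2) * ((1 - K) / 2) ≤
      (1 - (t + K / t) / 2) * (1 - (A + K / A) / 2) := by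
  have hAt : 0 < A * t := mul_pos hA0 ht0
  have hfac : 0 ≤ 2 * A * t - K * (A + t + A * t - 1) := by
    nlinarith [mul_nonneg (sub_nonneg.2 hA1) (sub_nonneg.2 ht1)]
  have key : 0 ≤ (1 - A) * (1 - t) * (2 * A * t - K * (A + t + A * t - 1)) :=
    mul_nonneg (mul_nonneg (sub_nonneg.2 hA1) (sub_nonneg.2 ht1)) hfac
  have hid : (1 - (t + K / t) / 2) * (1 - (A + K / A) / 2) -
      (1 - (A * t + K / (A * t)) / 2) * ((1 - K) / 2) =
      ((1 - A) * (1 - t) * (2 * A * t - K * (A + t + A * t - 1))) / (4 * (A * t)) := by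
    field_simp
    ring
  nlinarith [div_nonneg key (by positivity : (0:ℝ) ≤ 4 * (A * t))]

private lemma blp_key2 (t T K : ℝ) (hT0 : 0 < T) (hKT : K ≤ T) (hTt : T ≤ t)
    (hK0 : 0 < K) :
    (1 - (t + K / t) / 2) * (1 / t) ≤ (1 - (T + K / T) / 2) * (1 / T) := by
  have ht0 : 0 < t := lt_of_lt_of_le hT0 hTt
  have hfac : 0 ≤ (t - T) * (2 * t * T - K * (t + T)) := by
    have h1 : K * t ≤ T * t := by nlinarith
    have h2 : K * T ≤ t * T := by nlinarith
    nlinarith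
  have hid : (1 - (T + K / T) / 2) * (1 / T) - (1 - (t + K / t) / 2) * (1 / t) =
      ((t - T) * (2 * t * T - K * (t + T))) / (2 * (t * t) * (T * T)) := by
    field_simp
    ring
  nlinarith [div_nonneg hfac (by positivity : (0:ℝ) ≤ 2 * (t * t) * (T * T))]

theorem blp_F_max (l u b Δf : ℝ) (hlu : l < u) (hb : 0 < b)
    (hΔf : 0 < Δf) (hΔfu : Δf ≤ u - l)
    (C : ℝ → ℝ)
    (hC : ∀ r, C r = 1 - (1 / 2) * (Real.exp (-(r - l) / b) + Real.exp (-(u - r) / b)))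
    (F : ℝ → ℝ → ℝ)
    (hF : ∀ r z, F r z = (C (r + z) / C r) * Real.exp (z / b)) :
    (∀ r ∈ Set.Icc l u, ∀ z ∈ Set.Icc 0 Δf, r + z ∈ Set.Icc l u →
      F r z ≤ F l Δf) ∧
    F l Δf = (C (l + Δf) / C l) * Real.exp (Δf / b) := by
  set K : ℝ := Real.exp (-(u - l) / b) with hKdef
  have hK0 : 0 < K := Real.exp_pos _
  have hK1 : K < 1 := by
    rw [hKdef, Real.exp_lt_one_iff]
    have h : 0 < (u - l) / b := div_pos (by linarith) hb
    rw [neg_div]; linarith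
  -- positivity of C on [l,u]
  have hCpos : ∀ r, r ∈ Set.Icc l u → 0 < C r := by
    intro r hr
    obtain ⟨hrl, hru⟩ := hr
    rw [hC r]
    have ha1 : Real.exp (-(r - l) / b) ≤ 1 := by
      rw [Real.exp_le_one_iff]
      have h : 0 ≤ (r - l) / b := div_nonneg (by linarith) hb.le
      rw [neg_div]; linarith
    have hc1 : Real.exp (-(u - r) / b) ≤ 1 := by
      rw [Real.exp_le_one_iff]
      have h : 0 ≤ (u - r) / b := div_nonneg (by linarith) hb.le
      rw [neg_div]; linarith
    have hprod : Real.exp (-(r - l) / b) * Real.exp (-(u - r) / b) = K := by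
      rw [← Real.exp_add, hKdef]
      congr 1
      ring
    have ha0 := Real.exp_pos (-(r - l) / b)
    have hc0 := Real.exp_pos (-(u - r) / b)
    nlinarith [mul_nonneg (sub_nonneg.2 ha1) (sub_nonneg.2 hc1)]
  have hCl : C l = (1 - K) / 2 := by
    rw [hC l]
    have h0 : -(l - l) / b = 0 := by ring
    rw [h0, Real.exp_zero]
    ring
  set T : ℝ := Real.exp (-Δf / b) with hTdef
  have hT0 : 0 < T := Real.exp_pos _
  have hCldf : C (l + Δf) = 1 - (T + K / T) / 2 := by
    rw [hC (l + Δf)]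
    have e1 : -(l + Δf - l) / b = -Δf / b := by ring
    have e2 : Real.exp (-(u - (l + Δf)) / b) = K / T := by
      rw [eq_div_iff hT0.ne', hTdef, ← Real.exp_add, hKdef]
      congr 1
      ring
    rw [e1, e2]
    ring
  have hKT : K ≤ T := by
    rw [hKdef, hTdef, Real.exp_le_exp]
    exact div_le_div_of_nonneg_right (by linarith) hb.le
  have hexpdf : Real.exp (Δf / b) = 1 / T := by
    rw [hTdef, one_div, ← Real.exp_neg]
    congr 1
    ring
  have hCl0 : 0 < C l := hCpos l ⟨le_refl l, hlu.le⟩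
  have hCldf0 : 0 < C (l + Δf) := hCpos (l + Δf) ⟨by linarith, by linarith⟩
  constructor
  · intro r hr z hz hrz
    obtain ⟨hrl, hru⟩ := hr
    obtain ⟨hz0, hzΔf⟩ := hz
    obtain ⟨hrzl, hrzu⟩ := hrz
    set A : ℝ := Real.exp (-(r - l) / b) with hAdef
    set t : ℝ := Real.exp (-z / b) with htdef
    have hA0 : 0 < A := Real.exp_pos _
    have ht0 : 0 < t := Real.exp_pos _
    have hA1 : A ≤ 1 := by
      rw [hAdef, Real.exp_le_one_iff, neg_div]
      have h : 0 ≤ (r - l) / b := div_nonneg (by linarith) hb.le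
      linarith
    have ht1 : t ≤ 1 := by
      rw [htdef, Real.exp_le_one_iff, neg_div]
      have h : 0 ≤ z / b := div_nonneg (by linarith) hb.le
      linarith
    have hTt : T ≤ t := by
      rw [hTdef, htdef, Real.exp_le_exp]
      exact div_le_div_of_nonneg_right (by linarith) hb.le
    have eAt : Real.exp (-(r + z - l) / b) = A * t := by
      rw [hAdef, htdef, ← Real.exp_add]
      congr 1
      ring
    have hKAt : K ≤ A * t := by
      rw [← eAt, hKdef, Real.exp_le_exp]
      exact div_le_div_of_nonneg_right (by linarith) hb.le
    have hCr : C r = 1 - (A + K / A) / 2 := by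
      rw [hC r]
      have e2 : Real.exp (-(u - r) / b) = K / A := by
        rw [eq_div_iff hA0.ne', hAdef, ← Real.exp_add, hKdef]
        congr 1
        ring
      rw [e2]
      ring
    have hCrz : C (r + z) = 1 - (A * t + K / (A * t)) / 2 := by
      rw [hC (r + z)]
      have e2 : Real.exp (-(u - (r + z)) / b) = K / (A * t) := by
        rw [eq_div_iff (mul_pos hA0 ht0).ne', ← eAt, ← Real.exp_add, hKdef]
        congr 1
        ring
      rw [eAt, e2]
      ring
    have hClz : C (l + z) = 1 - (t + K / t) / 2 := by
      rw [hC (l + z)]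
      have e1 : -(l + z - l) / b = -z / b := by ring
      have e2 : Real.exp (-(u - (l + z)) / b) = K / t := by
        rw [eq_div_iff ht0.ne', htdef, ← Real.exp_add, hKdef]
        congr 1
        ring
      rw [e1, e2]
      ring
    have hexpz : Real.exp (z / b) = 1 / t := by
      rw [htdef, one_div, ← Real.exp_neg]
      congr 1
      ring
    have hCr0 : 0 < C r := hCpos r ⟨hrl, hru⟩
    have step1 : C (r + z) * C l ≤ C (l + z) * C r := by
      rw [hCrz, hCl, hClz, hCr]
      exact blp_key1 A t K hA0 ht0 hA1 ht1 hK0 hK1.le hKAt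
    have step2 : C (l + z) * Real.exp (z / b) ≤ C (l + Δf) * Real.exp (Δf / b) := by
      rw [hClz, hCldf, hexpz, hexpdf]
      exact blp_key2 t T K hT0 hKT hTt hK0
    rw [hF r z, hF l Δf, div_mul_eq_mul_div, div_mul_eq_mul_div,
      div_le_div_iff₀ hCr0 hCl0]
    calc C (r + z) * Real.exp (z / b) * C l
        = C (r + z) * C l * Real.exp (z / b) := by ring
      _ ≤ C (l + z) * C r * Real.exp (z / b) :=
          mul_le_mul_of_nonneg_right step1 (Real.exp_pos _).le
      _ = C (l + z) * Real.exp (z / b) * C r := by ring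
      _ ≤ C (l + Δf) * Real.exp (Δf / b) * C r :=
          mul_le_mul_of_nonneg_right step2 hCr0.le
  · exact hF l Δf
end

section
/- Let W be the bounded Laplace mechanism on [l,u] with scale b, i.e., W with input r has density f_W(r*) = (1/C(r))(1/(2b)) e^{-|r*-r|/b} for r* ∈ [l,u] and 0 otherwise. If b ≥ Δf/(ε - log ΔC), where ΔC = C(l+Δf)/C(l) and ε > log ΔC, then for all inputs r, r' ∈ [l,u] with |r - r'| ≤ Δf and every measurable S ⊆ [l,u], ∫_S f_W^r(x) dx ≤ e^ε ∫_S f_W^{r'}(x) dx (i.e., W satisfies ε-local differential privacy). -/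
/-!
Put `y = e^{(r-l)/b}`, `Q = e^{|r-r'|/b}`, `Q' = e^{Δf/b}`, `K = e^{-(u-l)/b}` and
`P(t) = 2t - 1 - Kt²`, so that `2y·C(r) = P(y)`. By the triangle inequality
`f_W^r ≤ (C(r') e^{|r-r'|/b} / C(r)) · f_W^{r'}` pointwise; for `r ≤ r'` this factor is
`P(yQ)/P(y)`, while `ΔC · e^{Δf/b} = P(Q')/P(1) ≤ e^ε` by the choice of `b`. So it suffices that
`P(yQ) P(1) ≤ P(Q) P(y) ≤ P(Q') P(y)`: the first difference factors as
`(y-1)(Q-1)(2(1-K) + K(y-1)(Q-1))`, and `P` is increasing on `[1, 1/K]`, which contains `y`, `yQ`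
and `Q'`. The case `r' < r` reduces to this one by the symmetry `C(l+u-s) = C(s)`.
-/

open Real Set MeasureTheory

noncomputable def truncLaplaceConst (l u b s : ℝ) : ℝ :=
  1 - (1 / 2) * (exp (-(s - l) / b) + exp (-(u - s) / b))

noncomputable def truncLaplacePDF (l u b r x : ℝ) : ℝ :=
  (1 / (2 * b * truncLaplaceConst l u b r)) * exp (-|x - r| / b)

def laplaceQuad (K t : ℝ) : ℝ := 2 * t - 1 - K * t ^ 2

section laplaceQuad

variable {K y Q Q' : ℝ}

lemma laplaceQuad_nonneg (hy : 1 ≤ y) (hKy : K * y ≤ 1) : 0 ≤ laplaceQuad K y := by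
  unfold laplaceQuad
  nlinarith

lemma laplaceQuad_le_laplaceQuad (hK : 0 ≤ K) (hQQ' : Q ≤ Q') (hKQ' : K * Q' ≤ 1) :
    laplaceQuad K Q ≤ laplaceQuad K Q' := by
  have hKQ : K * Q ≤ 1 := (mul_le_mul_of_nonneg_left hQQ' hK).trans hKQ'
  have key : laplaceQuad K Q' - laplaceQuad K Q = (Q' - Q) * (2 - K * Q - K * Q') := by
    unfold laplaceQuad; ring
  nlinarith

lemma laplaceQuad_mul_le_mul (hK : 0 ≤ K) (hy : 1 ≤ y) (hQ : 1 ≤ Q)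
    (hKyQ : K * (y * Q) ≤ 1) :
    laplaceQuad K (y * Q) * laplaceQuad K 1 ≤ laplaceQuad K Q * laplaceQuad K y := by
  have key : laplaceQuad K Q * laplaceQuad K y - laplaceQuad K (y * Q) * laplaceQuad K 1
      = (y - 1) * (Q - 1) * (2 * (1 - K) + K * ((y - 1) * (Q - 1))) := by
    unfold laplaceQuad; ring
  have hK1 : K ≤ 1 :=
    (le_mul_of_one_le_right hK (one_le_mul_of_one_le_of_one_le hy hQ)).trans hKyQ
  have hyQ : 0 ≤ (y - 1) * (Q - 1) := mul_nonneg (by linarith) (by linarith)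
  nlinarith [mul_nonneg hK hyQ]

end laplaceQuad

section truncLaplaceConst

variable {l u b s : ℝ}

lemma truncLaplaceConst_symm (l u b s : ℝ) :
    truncLaplaceConst l u b (l + u - s) = truncLaplaceConst l u b s := by
  unfold truncLaplaceConst
  rw [show -(l + u - s - l) / b = -(u - s) / b by ring,
    show -(u - (l + u - s)) / b = -(s - l) / b by ring, add_comm]

lemma truncLaplaceConst_pos (hlu : l < u) (hb : 0 < b) (hs : s ∈ Icc l u) :
    0 < truncLaplaceConst l u b s := by
  have h₁ : exp (-(s - l) / b) ≤ 1 :=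
    exp_le_one_iff.2 (div_nonpos_of_nonpos_of_nonneg (by linarith [hs.1]) hb.le)
  have h₂ : exp (-(u - s) / b) ≤ 1 :=
    exp_le_one_iff.2 (div_nonpos_of_nonpos_of_nonneg (by linarith [hs.2]) hb.le)
  have h₁₂ : exp (-(s - l) / b) * exp (-(u - s) / b) < 1 := by
    rw [← exp_add, exp_lt_one_iff, ← add_div]
    exact div_neg_of_neg_of_pos (by linarith) hb
  unfold truncLaplaceConst
  nlinarith [mul_nonneg (sub_nonneg.2 h₁) (sub_nonneg.2 h₂)]

lemma truncLaplaceConst_mul_two_exp (l u b s : ℝ) :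
    truncLaplaceConst l u b s * (2 * exp ((s - l) / b))
      = laplaceQuad (exp (-(u - l) / b)) (exp ((s - l) / b)) := by
  have h₁ : exp (-(s - l) / b) * exp ((s - l) / b) = 1 := by
    rw [← exp_add, neg_div, neg_add_cancel, exp_zero]
  have h₂ : exp (-(u - s) / b) = exp (-(u - l) / b) * exp ((s - l) / b) := by
    rw [← exp_add]; ring_nf
  unfold truncLaplaceConst laplaceQuad
  rw [h₂]
  linear_combination (-1 : ℝ) * h₁

lemma truncLaplaceConst_mul_exp_le {r r' Δ : ℝ} (hb : 0 < b) (hr : l ≤ r) (hrr' : r ≤ r')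
    (hr' : r' ≤ u) (hd : r' - r ≤ Δ) (hΔ : Δ ≤ u - l) :
    truncLaplaceConst l u b r' * exp ((r' - r) / b) * truncLaplaceConst l u b l
      ≤ truncLaplaceConst l u b (l + Δ) * exp (Δ / b) * truncLaplaceConst l u b r := by
  set C := truncLaplaceConst l u b
  set K := exp (-(u - l) / b)
  set y := exp ((r - l) / b)
  set Q := exp ((r' - r) / b)
  set Q' := exp (Δ / b)
  have hK : 0 ≤ K := (exp_pos _).le
  have hy : 1 ≤ y := one_le_exp (div_nonneg (by linarith) hb.le)
  have hQ : 1 ≤ Q := one_le_exp (div_nonneg (by linarith) hb.le)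
  have hQQ' : Q ≤ Q' := exp_le_exp.2 (div_le_div_of_nonneg_right hd hb.le)
  have hKyQ : K * (y * Q) ≤ 1 := by
    rw [← exp_add, ← exp_add, exp_le_one_iff, ← add_div, ← add_div]
    exact div_nonpos_of_nonpos_of_nonneg (by linarith) hb.le
  have hKQ' : K * Q' ≤ 1 := by
    rw [← exp_add, exp_le_one_iff, ← add_div]
    exact div_nonpos_of_nonpos_of_nonneg (by linarith) hb.le
  have hKy : K * y ≤ 1 :=
    (mul_le_mul_of_nonneg_left (le_mul_of_one_le_right (by positivity) hQ) hK).trans hKyQ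
  have hCr := truncLaplaceConst_mul_two_exp l u b r
  have hCr' := truncLaplaceConst_mul_two_exp l u b r'
  rw [show (r' - l) / b = (r - l) / b + (r' - r) / b by ring, exp_add] at hCr'
  have hCl := truncLaplaceConst_mul_two_exp l u b l
  rw [sub_self, zero_div, exp_zero] at hCl
  have hClΔ := truncLaplaceConst_mul_two_exp l u b (l + Δ)
  rw [add_sub_cancel_left] at hClΔ
  refine le_of_mul_le_mul_right ?_ (show 0 < 4 * y by positivity)
  calc C r' * Q * C l * (4 * y) = C r' * (2 * (y * Q)) * (C l * (2 * 1)) := by ring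
    _ = laplaceQuad K (y * Q) * laplaceQuad K 1 := by rw [hCr', hCl]
    _ ≤ laplaceQuad K Q * laplaceQuad K y := laplaceQuad_mul_le_mul hK hy hQ hKyQ
    _ ≤ laplaceQuad K Q' * laplaceQuad K y :=
        mul_le_mul_of_nonneg_right (laplaceQuad_le_laplaceQuad hK hQQ' hKQ')
          (laplaceQuad_nonneg hy hKy)
    _ = C (l + Δ) * (2 * Q') * (C r * (2 * y)) := by rw [hClΔ, hCr]
    _ = C (l + Δ) * Q' * C r * (4 * y) := by ring

lemma truncLaplaceConst_mul_exp_abs_le {r r' Δ : ℝ} (hb : 0 < b) (hr : r ∈ Icc l u)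
    (hr' : r' ∈ Icc l u) (hd : |r - r'| ≤ Δ) (hΔ : Δ ≤ u - l) :
    truncLaplaceConst l u b r' * exp (|r - r'| / b) * truncLaplaceConst l u b l
      ≤ truncLaplaceConst l u b (l + Δ) * exp (Δ / b) * truncLaplaceConst l u b r := by
  rcases le_total r r' with h | h
  · rw [abs_sub_comm, abs_of_nonneg (sub_nonneg.2 h)] at hd ⊢
    exact truncLaplaceConst_mul_exp_le hb hr.1 h hr'.2 hd hΔ
  · rw [abs_of_nonneg (sub_nonneg.2 h)] at hd ⊢
    have := truncLaplaceConst_mul_exp_le (r := l + u - r) (r' := l + u - r') hb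
      (by linarith [hr.2]) (by linarith) (by linarith [hr'.1]) (by linarith) hΔ
    rwa [truncLaplaceConst_symm, truncLaplaceConst_symm,
      show l + u - r' - (l + u - r) = r - r' by ring] at this

end truncLaplaceConst

lemma exp_neg_abs_sub_le (x r r' b : ℝ) (hb : 0 ≤ b) :
    exp (-|x - r| / b) ≤ exp (|r - r'| / b) * exp (-|x - r'| / b) := by
  rw [← exp_add, exp_le_exp, ← add_div]
  exact div_le_div_of_nonneg_right (by linarith [abs_sub_le x r r']) hb

lemma truncLaplacePDF_le_exp_mul {l u b r r' Δ ε : ℝ} (hlu : l < u) (hb : 0 < b)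
    (hr : r ∈ Icc l u) (hr' : r' ∈ Icc l u) (hd : |r - r'| ≤ Δ) (hΔ : Δ ≤ u - l)
    (hε : log (truncLaplaceConst l u b (l + Δ) / truncLaplaceConst l u b l) + Δ / b ≤ ε)
    (x : ℝ) :
    truncLaplacePDF l u b r x ≤ exp ε * truncLaplacePDF l u b r' x := by
  set C := truncLaplaceConst l u b
  have hCl : 0 < C l := truncLaplaceConst_pos hlu hb (left_mem_Icc.2 hlu.le)
  have hCr : 0 < C r := truncLaplaceConst_pos hlu hb hr
  have hCr' : 0 < C r' := truncLaplaceConst_pos hlu hb hr'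
  have hClΔ : 0 < C (l + Δ) :=
    truncLaplaceConst_pos hlu hb ⟨by linarith [abs_nonneg (r - r')], by linarith⟩
  have hratio : C r' * exp (|r - r'| / b) ≤ exp ε * C r := by
    refine le_of_mul_le_mul_right ?_ hCl
    calc C r' * exp (|r - r'| / b) * C l ≤ C (l + Δ) * exp (Δ / b) * C r :=
          truncLaplaceConst_mul_exp_abs_le hb hr hr' hd hΔ
      _ = exp (log (C (l + Δ) / C l) + Δ / b) * C r * C l := by
          rw [exp_add, exp_log (div_pos hClΔ hCl)]; field_simp
      _ ≤ exp ε * C r * C l := by gcongr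
  unfold truncLaplacePDF
  calc 1 / (2 * b * C r) * exp (-|x - r| / b)
      ≤ 1 / (2 * b * C r) * (exp (|r - r'| / b) * exp (-|x - r'| / b)) :=
        mul_le_mul_of_nonneg_left (exp_neg_abs_sub_le x r r' b hb.le) (by positivity)
    _ = C r' * exp (|r - r'| / b) / (C r * C r') * (1 / (2 * b)) * exp (-|x - r'| / b) := by
        field_simp
    _ ≤ exp ε * C r / (C r * C r') * (1 / (2 * b)) * exp (-|x - r'| / b) := by gcongr
    _ = exp ε * (1 / (2 * b * C r') * exp (-|x - r'| / b)) := by field_simp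

lemma integrableOn_truncLaplacePDF (l u b r : ℝ) {S : Set ℝ} (hS : S ⊆ Icc l u) :
    IntegrableOn (truncLaplacePDF l u b r) S := by
  refine (Continuous.integrableOn_Icc ?_).mono_set hS
  unfold truncLaplacePDF
  fun_prop

theorem blp_ldp_general (l u b Δf ε : ℝ) (hlu : l < u) (hb : 0 < b)
    (hΔfu : Δf ≤ u - l)
    (C : ℝ → ℝ)
    (hC : ∀ r, C r = 1 - (1 / 2) * (Real.exp (-(r - l) / b) + Real.exp (-(u - r) / b)))
    (f : ℝ → ℝ → ℝ)
    (hf : ∀ r x, f r x = (1 / (2 * b * C r)) * Real.exp (-|x - r| / b))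
    (hεC : Real.log (C (l + Δf) / C l) < ε)
    (hbige : b ≥ Δf / (ε - Real.log (C (l + Δf) / C l))) :
    ∀ r ∈ Set.Icc l u, ∀ r' ∈ Set.Icc l u, |r - r'| ≤ Δf →
      ∀ S : Set ℝ, MeasurableSet S → S ⊆ Set.Icc l u →
        ∫ x in S, f r x ≤ Real.exp ε * ∫ x in S, f r' x := by
  obtain rfl : C = truncLaplaceConst l u b := funext hC
  obtain rfl : f = truncLaplacePDF l u b := funext₂ hf
  intro r hr r' hr' hd S _ hS
  set L := log (truncLaplaceConst l u b (l + Δf) / truncLaplaceConst l u b l)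
  have hbudget : L + Δf / b ≤ ε := by
    have := (div_le_iff₀ (sub_pos.2 hεC)).1 hbige
    rw [← le_sub_iff_add_le', div_le_iff₀ hb]
    linarith
  rw [← integral_const_mul]
  exact setIntegral_mono (integrableOn_truncLaplacePDF l u b r hS)
    ((integrableOn_truncLaplacePDF l u b r' hS).const_mul _)
    (truncLaplacePDF_le_exp_mul hlu hb hr hr' hd hΔfu hbudget)

theorem blp_ldp (l u b Δf ε : ℝ) (hlu : l < u) (hb : 0 < b)
    (hΔf : 0 < Δf) (hΔfu : Δf ≤ u - l) (hε : 0 < ε)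
    (C : ℝ → ℝ)
    (hC : ∀ r, C r = 1 - (1 / 2) * (Real.exp (-(r - l) / b) + Real.exp (-(u - r) / b)))
    (f : ℝ → ℝ → ℝ)
    (hf : ∀ r x, f r x = (1 / (2 * b * C r)) * Real.exp (-|x - r| / b))
    (hεC : Real.log (C (l + Δf) / C l) < ε)
    (hbige : b ≥ Δf / (ε - Real.log (C (l + Δf) / C l))) :
    ∀ r ∈ Set.Icc l u, ∀ r' ∈ Set.Icc l u, |r - r'| ≤ Δf →
      ∀ S : Set ℝ, MeasurableSet S → S ⊆ Set.Icc l u →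
        ∫ x in S, f r x ≤ Real.exp ε * ∫ x in S, f r' x :=
  blp_ldp_general l u b Δf ε hlu hb hΔfu C hC f hf hεC hbige
end

section
/- For the bounded Laplace mechanism with sensitivity Δf = u - l, the condition b ≥ (u - l)/ε suffices for ε-local differential privacy: for all r, r' ∈ [l,u] and all x ∈ [l,u], f_W^r(x) ≤ e^ε f_W^{r'}(x). -/
/-!
Write `p = (r - l)/b`, `q = (u - r)/b`, so that `p + q = D := (u - l)/b ≤ ε`. The normalizer
`C(r) = 1 - (e^{-p} + e^{-q})/2` lies between `(1 - e^{-D})/2` and `(e^D - 1)/(2 e^{max p q})`,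
and `|x - r|/b ≤ max p q`. Hence every density value lies in `[1/(b(e^D - 1)), e^D/(b(e^D - 1))]`,
an interval whose endpoints differ by the factor `e^D ≤ e^ε`.
-/

open Real Set

/-- `C(r)`: the mass that the Laplace density of scale `b` centred at `r` puts on `[l, u]`. -/
noncomputable def blpNormalizer (l u b r : ℝ) : ℝ :=
  1 - (1 / 2) * (exp (-(r - l) / b) + exp (-(u - r) / b))

/-- `f_W^r(x)` -/
noncomputable def blpDensity (l u b r x : ℝ) : ℝ :=
  (1 / (2 * b * blpNormalizer l u b r)) * exp (-|x - r| / b)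

lemma one_sub_exp_neg_add_div_two_le {p q : ℝ} (hp : 0 ≤ p) (hq : 0 ≤ q) :
    (1 - exp (-(p + q))) / 2 ≤ 1 - (1 / 2) * (exp (-p) + exp (-q)) := by
  have hp' : exp (-p) ≤ 1 := exp_le_one_iff.2 (by linarith)
  have hq' : exp (-q) ≤ 1 := exp_le_one_iff.2 (by linarith)
  rw [neg_add, exp_add]
  nlinarith [mul_nonneg (sub_nonneg.2 hp') (sub_nonneg.2 hq')]

lemma one_sub_half_exp_neg_add_mul_exp_le (p q : ℝ) :
    (1 - (1 / 2) * (exp (-p) + exp (-q))) * exp p ≤ (exp (p + q) - 1) / 2 := by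
  have hq := exp_pos q
  have gap : (exp (p + q) - 1) / 2 - (1 - (1 / 2) * (exp (-p) + exp (-q))) * exp p
      = exp p * (exp q - 1) ^ 2 / (2 * exp q) := by
    rw [exp_neg, exp_neg, exp_add]
    field_simp
    ring
  rw [← sub_nonneg, gap]
  positivity

lemma one_sub_half_exp_neg_add_mul_exp_max_le (p q : ℝ) :
    (1 - (1 / 2) * (exp (-p) + exp (-q))) * exp (max p q) ≤ (exp (p + q) - 1) / 2 := by
  rcases le_total p q with hpq | hqp
  · rw [max_eq_right hpq, add_comm (exp (-p)), add_comm p]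
    exact one_sub_half_exp_neg_add_mul_exp_le q p
  · rw [max_eq_left hqp]
    exact one_sub_half_exp_neg_add_mul_exp_le p q

section

variable {l u b r : ℝ}

lemma blpNormalizer_eq (l u b r : ℝ) :
    blpNormalizer l u b r = 1 - (1 / 2) * (exp (-((r - l) / b)) + exp (-((u - r) / b))) := by
  rw [blpNormalizer, neg_div, neg_div]

lemma one_sub_exp_neg_div_two_le_blpNormalizer (hb : 0 < b) (hr : r ∈ Icc l u) :
    (1 - exp (-((u - l) / b))) / 2 ≤ blpNormalizer l u b r := by
  rw [blpNormalizer_eq, show (u - l) / b = (r - l) / b + (u - r) / b by ring]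
  exact one_sub_exp_neg_add_div_two_le (div_nonneg (by linarith [hr.1]) hb.le)
    (div_nonneg (by linarith [hr.2]) hb.le)

lemma exp_neg_sub_div_lt_one (hb : 0 < b) (hlu : l < u) : exp (-((u - l) / b)) < 1 :=
  exp_lt_one_iff.2 (neg_lt_zero.2 (div_pos (sub_pos.2 hlu) hb))

lemma blpNormalizer_pos (hb : 0 < b) (hlu : l < u) (hr : r ∈ Icc l u) :
    0 < blpNormalizer l u b r := by
  linarith [one_sub_exp_neg_div_two_le_blpNormalizer hb hr, exp_neg_sub_div_lt_one hb hlu]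

lemma blpNormalizer_mul_exp_le (hb : 0 < b) (hlu : l < u) {x : ℝ} (hr : r ∈ Icc l u)
    (hx : x ∈ Icc l u) :
    blpNormalizer l u b r * exp (|x - r| / b) ≤ (exp ((u - l) / b) - 1) / 2 := by
  have hdist : |x - r| / b ≤ max ((r - l) / b) ((u - r) / b) := by
    rw [max_div_div_right hb.le]
    gcongr
    rcases abs_cases (x - r) with ⟨h, -⟩ | ⟨h, -⟩ <;> rw [h]
    · exact le_max_of_le_right (by linarith [hx.2])
    · exact le_max_of_le_left (by linarith [hx.1])
  calc blpNormalizer l u b r * exp (|x - r| / b)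
      ≤ blpNormalizer l u b r * exp (max ((r - l) / b) ((u - r) / b)) := by
        gcongr
        exact (blpNormalizer_pos hb hlu hr).le
    _ ≤ (exp ((u - l) / b) - 1) / 2 := by
        rw [blpNormalizer_eq, show (u - l) / b = (r - l) / b + (u - r) / b by ring]
        exact one_sub_half_exp_neg_add_mul_exp_max_le _ _

lemma mul_exp_div_sub_one_pos (hb : 0 < b) (hlu : l < u) :
    0 < b * (exp ((u - l) / b) - 1) :=
  mul_pos hb (sub_pos.2 (one_lt_exp_iff.2 (div_pos (sub_pos.2 hlu) hb)))

lemma blpDensity_le (hb : 0 < b) (hlu : l < u) (x : ℝ) (hr : r ∈ Icc l u) :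
    blpDensity l u b r x ≤ exp ((u - l) / b) / (b * (exp ((u - l) / b) - 1)) := by
  have hC := one_sub_exp_neg_div_two_le_blpNormalizer hb hr
  have hC0 := blpNormalizer_pos hb hlu hr
  have hexp : exp (-|x - r| / b) ≤ 1 :=
    exp_le_one_iff.2 (div_nonpos_of_nonpos_of_nonneg (neg_nonpos.2 (abs_nonneg _)) hb.le)
  calc blpDensity l u b r x ≤ 1 / (2 * b * blpNormalizer l u b r) :=
        mul_le_of_le_one_right (by positivity) hexp
    _ ≤ 1 / (2 * b * ((1 - exp (-((u - l) / b))) / 2)) := by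
        gcongr
        exact mul_pos (by positivity) (by linarith [exp_neg_sub_div_lt_one hb hlu])
    _ = exp ((u - l) / b) / (b * (exp ((u - l) / b) - 1)) := by
        rw [exp_neg]
        field_simp

lemma le_blpDensity (hb : 0 < b) (hlu : l < u) {x : ℝ} (hr : r ∈ Icc l u) (hx : x ∈ Icc l u) :
    1 / (b * (exp ((u - l) / b) - 1)) ≤ blpDensity l u b r x := by
  have hC0 := blpNormalizer_pos hb hlu hr
  calc 1 / (b * (exp ((u - l) / b) - 1)) = 1 / (2 * b * ((exp ((u - l) / b) - 1) / 2)) := by ring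
    _ ≤ 1 / (2 * b * (blpNormalizer l u b r * exp (|x - r| / b))) := by
        gcongr
        exact blpNormalizer_mul_exp_le hb hlu hr hx
    _ = blpDensity l u b r x := by
        rw [blpDensity, neg_div, exp_neg]
        field_simp

end

theorem blp_ldp_full_sensitivity (l u b ε : ℝ) (hlu : l < u) (hε : 0 < ε)
    (hb : b ≥ (u - l) / ε)
    (C : ℝ → ℝ)
    (hC : ∀ r, C r = 1 - (1 / 2) * (Real.exp (-(r - l) / b) + Real.exp (-(u - r) / b)))
    (f : ℝ → ℝ → ℝ)
    (hf : ∀ r x, f r x = (1 / (2 * b * C r)) * Real.exp (-|x - r| / b)) :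
    ∀ r ∈ Set.Icc l u, ∀ r' ∈ Set.Icc l u, ∀ x ∈ Set.Icc l u,
      f r x ≤ Real.exp ε * f r' x := by
  obtain rfl : C = blpNormalizer l u b := funext hC
  obtain rfl : f = blpDensity l u b := funext fun r => funext (hf r)
  intro r hr r' hr' x hx
  have hb0 : 0 < b := (div_pos (sub_pos.2 hlu) hε).trans_le hb
  have hDε : (u - l) / b ≤ ε :=
    (div_le_iff₀ hb0).2 (by rwa [ge_iff_le, div_le_iff₀ hε, mul_comm] at hb)
  calc blpDensity l u b r x ≤ exp ((u - l) / b) / (b * (exp ((u - l) / b) - 1)) :=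
        blpDensity_le hb0 hlu x hr
    _ = exp ((u - l) / b) * (1 / (b * (exp ((u - l) / b) - 1))) := by ring
    _ ≤ exp ε * blpDensity l u b r' x :=
        mul_le_mul (exp_le_exp.2 hDε) (le_blpDensity hb0 hlu hr' hx)
          (one_div_pos.2 (mul_exp_div_sub_one_pos hb0 hlu)).le (exp_pos ε).le
end

section
/- For all r, r' ∈ [l,u] with r' = r + z and 0 ≤ z ≤ Δf ≤ u - l, the pointwise density ratio of the bounded Laplace mechanism satisfies f_W^r(x)/f_W^{r'}(x) ≤ (C(r')/C(r)) e^{|r'-r|/b} ≤ ΔC e^{Δf/b} for all x ∈ [l,u]. -/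
private lemma blp_exp_mono' (x y b : ℝ) (hb : 0 < b) (h : x ≤ y) :
    Real.exp (-y / b) ≤ Real.exp (-x / b) := by
  apply Real.exp_le_exp.mpr
  rw [neg_div, neg_div]
  exact neg_le_neg ((div_le_div_iff_of_pos_right hb).mpr h)

private lemma blp_exp_le_one' (x b : ℝ) (hb : 0 < b) (hx : 0 ≤ x) :
    Real.exp (-x / b) ≤ 1 := by
  have := blp_exp_mono' 0 x b hb hx
  simpa using this

private lemma blp_stepA (A p s : ℝ) (hA0 : 0 < A) (hA1 : A ≤ 1) (hp0 : 0 < p)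
    (hp1 : p ≤ 1) (hs0 : 0 < s) (hs1 : s ≤ 1) :
    (1 - (1/2)*(p*s + A/(p*s))) * (1 - (1/2)*(1 + A)) ≤
      (1 - (1/2)*(s + A/s)) * (1 - (1/2)*(p + A/p)) := by
  have hps : 0 < p * s := mul_pos hp0 hs0
  have hps' : p * s ≠ 0 := hps.ne'
  have hp' : p ≠ 0 := hp0.ne'
  have hs' : s ≠ 0 := hs0.ne'
  have key : (2*(p*s) - (p*s)^2 - A)*(1-A) ≤ (2*s - s^2 - A)*(2*p - p^2 - A) := by
    nlinarith [mul_nonneg (mul_nonneg (mul_nonneg (mul_nonneg hp0.le hs0.le)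
        (sub_nonneg.2 hA1)) (sub_nonneg.2 hp1)) (sub_nonneg.2 hs1),
      mul_nonneg hA0.le (sq_nonneg ((1-p)*(1-s)))]
  have e1 : (1 - (1/2)*(p*s + A/(p*s))) = (2*(p*s) - (p*s)^2 - A)/(2*(p*s)) := by
    field_simp; ring
  have e2 : (1 - (1/2)*(s + A/s)) = (2*s - s^2 - A)/(2*s) := by field_simp; ring
  have e3 : (1 - (1/2)*(p + A/p)) = (2*p - p^2 - A)/(2*p) := by field_simp; ring
  have e4 : (1 - (1/2)*(1 + A)) = (1-A)/2 := by ring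
  rw [e1, e2, e3, e4, div_mul_div_comm, div_mul_div_comm,
    div_le_div_iff₀ (by positivity) (by positivity)]
  nlinarith [mul_le_mul_of_nonneg_left key (by positivity : (0:ℝ) ≤ 4*p*s)]

private lemma blp_stepB (A E s : ℝ) (hA0 : 0 < A) (hAE : A ≤ E) (hEs : E ≤ s) :
    (1 - (1/2)*(s + A/s)) * (1/s) ≤ (1 - (1/2)*(E + A/E)) * (1/E) := by
  have hE0 : 0 < E := lt_of_lt_of_le hA0 hAE
  have hs0 : 0 < s := lt_of_lt_of_le hE0 hEs
  have hE' : E ≠ 0 := hE0.ne'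
  have hs' : s ≠ 0 := hs0.ne'
  have e1 : (1 - (1/2)*(s + A/s)) * (1/s) = (2*s - s^2 - A)/(2*s^2) := by
    field_simp; ring
  have e2 : (1 - (1/2)*(E + A/E)) * (1/E) = (2*E - E^2 - A)/(2*E^2) := by
    field_simp; ring
  rw [e1, e2, div_le_div_iff₀ (by positivity) (by positivity)]
  nlinarith [mul_nonneg (sub_nonneg.2 hEs)
    (add_nonneg (mul_nonneg hs0.le (sub_nonneg.2 hAE))
      (mul_nonneg hE0.le (sub_nonneg.2 (hAE.trans hEs))))]

theorem blp_density_ratio_bound (l u b Δf : ℝ) (hlu : l < u) (hb : 0 < b)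
    (hΔf : 0 < Δf) (hΔfu : Δf ≤ u - l)
    (C : ℝ → ℝ)
    (hC : ∀ r, C r = 1 - (1 / 2) * (Real.exp (-(r - l) / b) + Real.exp (-(u - r) / b)))
    (f : ℝ → ℝ → ℝ)
    (hf : ∀ r x, f r x = (1 / (2 * b * C r)) * Real.exp (-|x - r| / b))
    (r r' z : ℝ) (hr : r ∈ Set.Icc l u) (hr' : r' ∈ Set.Icc l u)
    (hz0 : 0 ≤ z) (hzΔ : z ≤ Δf) (hrr' : r' = r + z) :
    ∀ x ∈ Set.Icc l u,
      f r x / f r' x ≤ (C r' / C r) * Real.exp (|r' - r| / b) ∧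
      (C r' / C r) * Real.exp (|r' - r| / b) ≤ (C (l + Δf) / C l) * Real.exp (Δf / b) := by
  -- positivity of C on [l,u]
  have hCpos : ∀ t, l ≤ t → t ≤ u → 0 < C t := by
    intro t h1 h2
    rw [hC]
    have e1 : Real.exp (-(t - l) / b) ≤ 1 := blp_exp_le_one' _ _ hb (by linarith)
    have e2 : Real.exp (-(u - t) / b) ≤ 1 := blp_exp_le_one' _ _ hb (by linarith)
    have e3 : Real.exp (-(t - l) / b) * Real.exp (-(u - t) / b) < 1 := by
      rw [← Real.exp_add]
      have : -(t - l) / b + -(u - t) / b = -((u - l) / b) := by ring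
      rw [this]
      have : 0 < (u - l) / b := div_pos (by linarith) hb
      calc Real.exp (-((u - l) / b)) < Real.exp 0 := Real.exp_lt_exp.mpr (by linarith)
        _ = 1 := Real.exp_zero
    nlinarith [mul_nonneg (sub_nonneg.2 e1) (sub_nonneg.2 e2)]
  have hCr0 : 0 < C r := hCpos r hr.1 hr.2
  have hCr'0 : 0 < C r' := hCpos r' hr'.1 hr'.2
  have hCl0 : 0 < C l := hCpos l le_rfl hlu.le
  intro x hx
  constructor
  · -- first inequality
    have hfr' : 0 < f r' x := by
      rw [hf]
      exact mul_pos (one_div_pos.mpr (mul_pos (mul_pos two_pos hb) hCr'0)) (Real.exp_pos _)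
    rw [div_le_iff₀ hfr', hf, hf]
    have key : Real.exp (-|x - r| / b) ≤
        Real.exp (|r' - r| / b) * Real.exp (-|x - r'| / b) := by
      rw [← Real.exp_add]
      apply Real.exp_le_exp.mpr
      have h1 : |x - r'| - |x - r| ≤ |r' - r| := by
        have h2 := abs_sub_abs_le_abs_sub (x - r') (x - r)
        have h3 : (x - r') - (x - r) = r - r' := by ring
        rw [h3, abs_sub_comm r r'] at h2
        exact h2
      have h4 : -|x - r| ≤ |r' - r| + -|x - r'| := by linarith
      calc -|x - r| / b ≤ (|r' - r| + -|x - r'|) / b := (div_le_div_iff_of_pos_right hb).mpr h4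
        _ = |r' - r| / b + -|x - r'| / b := by ring
    have heq : C r' / C r * Real.exp (|r' - r| / b) *
        (1 / (2 * b * C r') * Real.exp (-|x - r'| / b)) =
        1 / (2 * b * C r) * (Real.exp (|r' - r| / b) * Real.exp (-|x - r'| / b)) := by
      field_simp
    rw [heq]
    exact mul_le_mul_of_nonneg_left key
      (le_of_lt (one_div_pos.mpr (mul_pos (mul_pos two_pos hb) hCr0)))
  · -- second inequality
    have habs : |r' - r| = z := by
      rw [hrr', add_sub_cancel_left, abs_of_nonneg hz0]
    rw [habs, div_mul_eq_mul_div, div_mul_eq_mul_div, div_le_div_iff₀ hCr0 hCl0]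
    set A := Real.exp (-(u - l) / b) with hA
    set p := Real.exp (-(r - l) / b) with hp
    set s := Real.exp (-z / b) with hs
    set E := Real.exp (-Δf / b) with hE
    have hA0 : 0 < A := Real.exp_pos _
    have hp0 : 0 < p := Real.exp_pos _
    have hs0 : 0 < s := Real.exp_pos _
    have hE0 : 0 < E := Real.exp_pos _
    have hA1 : A ≤ 1 := blp_exp_le_one' _ _ hb (by linarith)
    have hp1 : p ≤ 1 := blp_exp_le_one' _ _ hb (by linarith [hr.1])
    have hs1 : s ≤ 1 := blp_exp_le_one' _ _ hb hz0
    have hAE : A ≤ E := blp_exp_mono' _ _ _ hb hΔfu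
    have hEs : E ≤ s := blp_exp_mono' _ _ _ hb hzΔ
    have hps : 0 < p * s := mul_pos hp0 hs0
    -- rewrite the C values
    have hCreq : C r = 1 - (1/2)*(p + A/p) := by
      rw [hC]
      have h2 : Real.exp (-(u - r) / b) = A / p := by
        rw [eq_div_iff hp0.ne', hp, hA, ← Real.exp_add]
        congr 1; ring
      rw [h2]
    have hCr'eq : C r' = 1 - (1/2)*(p*s + A/(p*s)) := by
      rw [hC, hrr']
      have h1 : Real.exp (-(r + z - l) / b) = p * s := by
        rw [hp, hs, ← Real.exp_add]; congr 1; ring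
      have h2 : Real.exp (-(u - (r + z)) / b) = A / (p * s) := by
        rw [eq_div_iff hps.ne', hp, hs, hA, ← Real.exp_add, ← Real.exp_add]
        congr 1; ring
      rw [h1, h2]
    have hCleq : C l = 1 - (1/2)*(1 + A) := by
      rw [hC]
      have h1 : Real.exp (-(l - l) / b) = 1 := by
        rw [show -(l - l)/b = 0 by ring, Real.exp_zero]
      rw [h1]
    have hClfeq : C (l + Δf) = 1 - (1/2)*(E + A/E) := by
      rw [hC]
      have h1 : Real.exp (-(l + Δf - l) / b) = E := by
        rw [hE]; congr 1; ring
      have h2 : Real.exp (-(u - (l + Δf)) / b) = A / E := by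
        rw [eq_div_iff hE0.ne', hE, hA, ← Real.exp_add]
        congr 1; ring
      rw [h1, h2]
    have hez : Real.exp (z / b) = 1 / s := by
      rw [one_div, hs, ← Real.exp_neg]; congr 1; ring
    have heΔ : Real.exp (Δf / b) = 1 / E := by
      rw [one_div, hE, ← Real.exp_neg]; congr 1; ring
    have hCrnn : (0:ℝ) ≤ 1 - (1/2)*(p + A/p) := by rw [← hCreq]; exact hCr0.le
    rw [hCreq, hCr'eq, hCleq, hClfeq, hez, heΔ]
    calc (1 - (1/2)*(p*s + A/(p*s))) * (1/s) * (1 - (1/2)*(1 + A))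
        = ((1 - (1/2)*(p*s + A/(p*s))) * (1 - (1/2)*(1 + A))) * (1/s) := by ring
      _ ≤ ((1 - (1/2)*(s + A/s)) * (1 - (1/2)*(p + A/p))) * (1/s) :=
          mul_le_mul_of_nonneg_right (blp_stepA A p s hA0 hA1 hp0 hp1 hs0 hs1)
            (by positivity)
      _ = ((1 - (1/2)*(s + A/s)) * (1/s)) * (1 - (1/2)*(p + A/p)) := by ring
      _ ≤ ((1 - (1/2)*(E + A/E)) * (1/E)) * (1 - (1/2)*(p + A/p)) :=
          mul_le_mul_of_nonneg_right (blp_stepB A E s hA0 hAE hEs) hCrnn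
      _ = (1 - (1/2)*(E + A/E)) * (1/E) * (1 - (1/2)*(p + A/p)) := by ring
end
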